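/- Let M be a compact smooth manifold without boundary, let ψ_y : M → ℝ^{L₂} be a smooth map that is injective and whose differential at every point of M is injective (a smooth embedding), and let ψ_x : M → ℝ^{L₁} be any smooth map. Then there exists a constant C ≥ 0 such that for all x, x′ ∈ M, ‖ψ_x(x) − ψ_x(x′)‖ ≤ C · ‖ψ_y(x) − ψ_y(x′)‖; in particular the cross map Φ = ψ_x ∘ ψ_y⁻¹ : ψ_y(M) → ℝ^{L₁} is Lipschitz continuous with respect to the Euclidean distances. -/

import Mathlib

open scoped Manifold
open Set Function Topology

/-- Local estimate: near every point, `ψx` differences are controlled by `ψy` differences. -/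
private lemma crossmap_local_est {d : ℕ} {M : Type*} [TopologicalSpace M]
    [ChartedSpace (EuclideanSpace ℝ (Fin d)) M] [IsManifold (𝓡 d) (⊤ : ℕ∞) M]
    {L₁ L₂ : ℕ}
    (ψy : M → EuclideanSpace ℝ (Fin L₂))
    (hyc : ContMDiff (𝓡 d) 𝓘(ℝ, EuclideanSpace ℝ (Fin L₂)) (⊤ : ℕ∞) ψy)
    (hyd : ∀ x : M,
      Function.Injective (mfderiv (𝓡 d) 𝓘(ℝ, EuclideanSpace ℝ (Fin L₂)) ψy x))
    (ψx : M → EuclideanSpace ℝ (Fin L₁))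
    (hxc : ContMDiff (𝓡 d) 𝓘(ℝ, EuclideanSpace ℝ (Fin L₁)) (⊤ : ℕ∞) ψx) (p : M) :
    ∃ U ∈ 𝓝 p, ∃ C : ℝ, 0 ≤ C ∧
      ∀ x ∈ U, ∀ x' ∈ U, ‖ψx x - ψx x'‖ ≤ C * ‖ψy x - ψy x'‖ := by
  set φ := extChartAt (𝓡 d) p with hφ
  set a : EuclideanSpace ℝ (Fin d) := φ p with ha
  set g : EuclideanSpace ℝ (Fin d) → EuclideanSpace ℝ (Fin L₂) := ψy ∘ φ.symm with hg
  set h : EuclideanSpace ℝ (Fin d) → EuclideanSpace ℝ (Fin L₁) := ψx ∘ φ.symm with hh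
  -- smoothness of the chart representatives
  have hgc : ContDiffAt ℝ (⊤ : ℕ∞) g a := by
    have h1 := (contMDiffAt_iff.1 (hyc p)).2
    simp only [extChartAt_model_space_eq_id, PartialEquiv.refl_coe, Function.id_comp,
      modelWithCornersSelf_coe, Set.range_id, contDiffWithinAt_univ] at h1
    exact h1
  have hhc : ContDiffAt ℝ (⊤ : ℕ∞) h a := by
    have h1 := (contMDiffAt_iff.1 (hxc p)).2
    simp only [extChartAt_model_space_eq_id, PartialEquiv.refl_coe, Function.id_comp,
      modelWithCornersSelf_coe, Set.range_id, contDiffWithinAt_univ] at h1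
    exact h1
  -- injectivity of the derivative of the representative
  have hdinj : Function.Injective (fderiv ℝ g a) := by
    have h1 := hyd p
    rw [MDifferentiableAt.mfderiv ((hyc p).mdifferentiableAt (by simp))] at h1
    simp only [writtenInExtChartAt, extChartAt_model_space_eq_id, PartialEquiv.refl_coe,
      Function.id_comp, modelWithCornersSelf_coe, Set.range_id, fderivWithin_univ] at h1
    exact h1
  -- antilipschitz constant for the derivative
  obtain ⟨K, hK0, hK⟩ := LinearMap.exists_antilipschitzWith (fderiv ℝ g a).toLinearMap
    (LinearMap.ker_eq_bot.2 hdinj)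
  -- f approximates its derivative with constant (2K)⁻¹ near a
  have hstrict : HasStrictFDerivAt g (fderiv ℝ g a) a := (hgc.of_le (by exact_mod_cast le_top) : ContDiffAt ℝ 1 g a).hasStrictFDerivAt one_ne_zero
  have hcpos : (0 : NNReal) < (2 * K)⁻¹ := by
    rw [pos_iff_ne_zero]
    simp [hK0.ne']
  obtain ⟨s, hs, hap⟩ := hstrict.approximates_deriv_on_nhds (Or.inr hcpos)
  -- local Lipschitz bound for h
  obtain ⟨L, t, ht, hL⟩ := (hhc.of_le (by exact_mod_cast le_top) : ContDiffAt ℝ 1 h a).exists_lipschitzOnWith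
  -- the neighborhood
  refine ⟨φ.source ∩ φ ⁻¹' (s ∩ t),
    Filter.inter_mem (extChartAt_source_mem_nhds p)
      ((continuousAt_extChartAt p).preimage_mem_nhds (Filter.inter_mem hs ht)),
    (L : ℝ) * (2 * K), by positivity, ?_⟩
  rintro x ⟨hxsrc, hxs, hxt⟩ x' ⟨hxsrc', hxs', hxt'⟩
  have hxinv : φ.symm (φ x) = x := φ.left_inv hxsrc
  have hxinv' : φ.symm (φ x') = x' := φ.left_inv hxsrc'
  -- antilipschitz estimate for g on s
  have key : ‖φ x - φ x'‖ ≤ 2 * (K : ℝ) * ‖g (φ x) - g (φ x')‖ := by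
    have h1 : ‖φ x - φ x'‖ ≤ (K : ℝ) * ‖(fderiv ℝ g a) (φ x - φ x')‖ := by
      have := hK.le_mul_dist (φ x - φ x') 0
      simpa [dist_eq_norm] using this
    have h2 : ‖g (φ x) - g (φ x') - (fderiv ℝ g a) (φ x - φ x')‖
        ≤ ((2 * K)⁻¹ : NNReal) * ‖φ x - φ x'‖ := hap _ hxs _ hxs'
    have h3 : ‖(fderiv ℝ g a) (φ x - φ x')‖
        ≤ ‖g (φ x) - g (φ x')‖ + ((2 * K)⁻¹ : NNReal) * ‖φ x - φ x'‖ := by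
      have h4 := norm_sub_le (g (φ x) - g (φ x'))
        (g (φ x) - g (φ x') - (fderiv ℝ g a) (φ x - φ x'))
      simp only [sub_sub_cancel] at h4
      linarith [h2]
    have hKc : ((2 * K)⁻¹ : NNReal) * (K : ℝ) = 1 / 2 := by
      rw [NNReal.coe_inv, NNReal.coe_mul]
      push_cast
      field_simp
    have hKR : (0 : ℝ) < K := hK0
    nlinarith [h1, mul_le_mul_of_nonneg_left h3 hKR.le, hKc,
      norm_nonneg (φ x - φ x'), norm_nonneg (g (φ x) - g (φ x'))]
  have hgx : g (φ x) = ψy x := by rw [hg]; simp [hxinv]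
  have hgx' : g (φ x') = ψy x' := by rw [hg]; simp [hxinv']
  have hhx : h (φ x) = ψx x := by rw [hh]; simp [hxinv]
  have hhx' : h (φ x') = ψx x' := by rw [hh]; simp [hxinv']
  calc ‖ψx x - ψx x'‖ = ‖h (φ x) - h (φ x')‖ := by rw [hhx, hhx']
    _ ≤ (L : ℝ) * ‖φ x - φ x'‖ := by
        have := hL.dist_le_mul (φ x) hxt (φ x') hxt'
        simpa [dist_eq_norm] using this
    _ ≤ (L : ℝ) * (2 * (K : ℝ) * ‖g (φ x) - g (φ x')‖) :=
        mul_le_mul_of_nonneg_left key L.coe_nonneg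
    _ = (L : ℝ) * (2 * K) * ‖ψy x - ψy x'‖ := by rw [hgx, hgx']; ring

/-- **Lipschitz regularity of the cross map.**
Let `M` be a compact smooth manifold without boundary, `ψy : M → ℝ^{L₂}` a smooth
embedding (injective with everywhere injective differential), and `ψx : M → ℝ^{L₁}` any
smooth map. Then there is `C ≥ 0` such that
`‖ψx x − ψx x'‖ ≤ C * ‖ψy x − ψy x'‖` for all `x, x' ∈ M`; in particular the cross map
`Φ = ψx ∘ ψy⁻¹ : ψy(M) → ℝ^{L₁}` is Lipschitz continuous. -/
theorem cross_map_lipschitz {d : ℕ} {M : Type*} [TopologicalSpace M]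
    [ChartedSpace (EuclideanSpace ℝ (Fin d)) M] [IsManifold (𝓡 d) (⊤ : ℕ∞) M]
    [CompactSpace M] {L₁ L₂ : ℕ}
    (ψy : M → EuclideanSpace ℝ (Fin L₂))
    (hyc : ContMDiff (𝓡 d) 𝓘(ℝ, EuclideanSpace ℝ (Fin L₂)) (⊤ : ℕ∞) ψy)
    (hyi : Function.Injective ψy)
    (hyd : ∀ x : M,
      Function.Injective (mfderiv (𝓡 d) 𝓘(ℝ, EuclideanSpace ℝ (Fin L₂)) ψy x))
    (ψx : M → EuclideanSpace ℝ (Fin L₁))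
    (hxc : ContMDiff (𝓡 d) 𝓘(ℝ, EuclideanSpace ℝ (Fin L₁)) (⊤ : ℕ∞) ψx) :
    ∃ C : ℝ, 0 ≤ C ∧
      (∀ x x' : M, ‖ψx x - ψx x'‖ ≤ C * ‖ψy x - ψy x'‖) ∧
      ∃ (K : NNReal) (Φ : Set.range ψy → EuclideanSpace ℝ (Fin L₁)),
        LipschitzWith K Φ ∧ ∀ x : M, Φ ⟨ψy x, Set.mem_range_self x⟩ = ψx x := by
  classical
  -- it suffices to find the constant; the cross map is then built from it
  suffices hmain : ∃ C : ℝ, 0 ≤ C ∧ ∀ x x' : M, ‖ψx x - ψx x'‖ ≤ C * ‖ψy x - ψy x'‖ by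
    obtain ⟨C, hC0, hC⟩ := hmain
    refine ⟨C, hC0, hC, C.toNNReal, fun z => ψx (Classical.choose z.2), ?_, ?_⟩
    · apply LipschitzWith.of_dist_le_mul
      intro z w
      have hz : ψy (Classical.choose z.2) = (z : EuclideanSpace ℝ (Fin L₂)) :=
        Classical.choose_spec z.2
      have hw : ψy (Classical.choose w.2) = (w : EuclideanSpace ℝ (Fin L₂)) :=
        Classical.choose_spec w.2
      have hd : dist z w = ‖ψy (Classical.choose z.2) - ψy (Classical.choose w.2)‖ := by
        rw [Subtype.dist_eq, dist_eq_norm, hz, hw]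
      rw [hd, dist_eq_norm, Real.coe_toNNReal C hC0]
      exact hC _ _
    · intro x
      have hspec : ψy (Classical.choose (Set.mem_range_self (f := ψy) x)) = ψy x :=
        Classical.choose_spec (Set.mem_range_self (f := ψy) x)
      exact congrArg ψx (hyi hspec)
  rcases isEmpty_or_nonempty M with hM | hM
  · exact ⟨0, le_refl 0, fun x => (IsEmpty.false x).elim⟩
  -- local estimates
  choose U hU C hC0 hC using crossmap_local_est ψy hyc hyd ψx hxc
  -- finite subcover of the diagonal neighborhoods
  obtain ⟨t, -, ht⟩ := isCompact_univ.elim_nhds_subcover (fun p => interior (U p))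
    (fun p _ => interior_mem_nhds.2 (hU p))
  set S : ℝ := ∑ p ∈ t, C p with hS
  have hS0 : 0 ≤ S := Finset.sum_nonneg fun p _ => hC0 p
  have hSle : ∀ p ∈ t, C p ≤ S := fun p hp =>
    Finset.single_le_sum (fun q _ => hC0 q) hp
  set W : Set (M × M) := ⋃ p ∈ t, interior (U p) ×ˢ interior (U p) with hW
  have hWopen : IsOpen W := isOpen_biUnion fun p _ => isOpen_interior.prod isOpen_interior
  have hdiag : ∀ x : M, (x, x) ∈ W := by
    intro x
    have := ht (Set.mem_univ x)
    simp only [Set.mem_iUnion, exists_prop] at this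
    obtain ⟨p, hp, hxp⟩ := this
    exact Set.mem_iUnion₂.2 ⟨p, hp, Set.mk_mem_prod hxp hxp⟩
  -- the estimate on W
  have hWest : ∀ z : M × M, z ∈ W → ‖ψx z.1 - ψx z.2‖ ≤ S * ‖ψy z.1 - ψy z.2‖ := by
    rintro ⟨x, x'⟩ hz
    simp only [hW, Set.mem_iUnion, Set.mem_prod, exists_prop] at hz
    obtain ⟨p, hp, hx, hx'⟩ := hz
    calc ‖ψx x - ψx x'‖ ≤ C p * ‖ψy x - ψy x'‖ :=
          hC p x (interior_subset hx) x' (interior_subset hx')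
      _ ≤ S * ‖ψy x - ψy x'‖ :=
          mul_le_mul_of_nonneg_right (hSle p hp) (norm_nonneg _)
  -- global bound on ψx
  obtain ⟨x₀, -, hx₀⟩ := isCompact_univ.exists_isMaxOn Set.univ_nonempty
    (hxc.continuous.norm.continuousOn (s := Set.univ))
  set B : ℝ := ‖ψx x₀‖ with hB
  have hBle : ∀ x : M, ‖ψx x‖ ≤ B := fun x => hx₀ (Set.mem_univ x)
  -- off-diagonal part
  rcases Set.eq_empty_or_nonempty Wᶜ with hWc | hWc
  · refine ⟨S, hS0, fun x x' => hWest (x, x') ?_⟩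
    by_contra hmem
    exact absurd (hWc ▸ hmem : (x, x') ∈ (∅ : Set (M × M))) (Set.notMem_empty _)
  · obtain ⟨z₀, hz₀mem, hz₀min⟩ := (hWopen.isClosed_compl.isCompact).exists_isMinOn hWc
      ((hyc.continuous.comp continuous_fst).sub
        (hyc.continuous.comp continuous_snd)).norm.continuousOn
    set m : ℝ := ‖ψy z₀.1 - ψy z₀.2‖ with hm
    have hmpos : 0 < m := by
      rw [hm, norm_pos_iff, sub_ne_zero]
      intro heq
      have heq2 : z₀.1 = z₀.2 := hyi heq
      have hzz : (z₀.1, z₀.2) ∈ W := by rw [← heq2]; exact hdiag z₀.1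
      exact hz₀mem (by simpa using hzz)
    have hmle : ∀ z : M × M, z ∈ Wᶜ → m ≤ ‖ψy z.1 - ψy z.2‖ := fun z hz => hz₀min hz
    refine ⟨max S (2 * B / m), le_trans hS0 (le_max_left _ _), fun x x' => ?_⟩
    by_cases hxx : (x, x') ∈ W
    · exact le_trans (hWest (x, x') hxx)
        (mul_le_mul_of_nonneg_right (le_max_left _ _) (norm_nonneg _))
    · have h1 : ‖ψx x - ψx x'‖ ≤ 2 * B := by
        calc ‖ψx x - ψx x'‖ ≤ ‖ψx x‖ + ‖ψx x'‖ := norm_sub_le _ _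
          _ ≤ B + B := add_le_add (hBle x) (hBle x')
          _ = 2 * B := by ring
      have h2 : m ≤ ‖ψy x - ψy x'‖ := hmle (x, x') hxx
      have hB0 : 0 ≤ B := le_trans (norm_nonneg _) (hBle x₀)
      calc ‖ψx x - ψx x'‖ ≤ 2 * B := h1
        _ = (2 * B / m) * m := by field_simp
        _ ≤ (2 * B / m) * ‖ψy x - ψy x'‖ :=
          mul_le_mul_of_nonneg_left h2 (by positivity)
        _ ≤ max S (2 * B / m) * ‖ψy x - ψy x'‖ :=
          mul_le_mul_of_nonneg_right (le_max_right _ _) (norm_nonneg _)
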